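/- arXiv:1708.01090 — 2 statements merged into one kernel-verified Lean document; each statement's English description precedes it below -/
import Mathlib

section
/- If f : [0,1] → [0,1] is a continuous surjection and G = {(f(t), t) : t ∈ [0,1]} is the graph of f^{-1}, then the Adler–Konheim–McAndrew topological entropy h(f) equals ent(G). -/
open Set Filter Topology unitInterval
open scoped Classical

noncomputable section

/-- The shift map on sequences in the unit interval. -/
def shiftMap (x : ℕ → unitInterval) : ℕ → unitInterval := fun n => x (n + 1)

/-- The `m`-fold Mahavier product `⋆_{i=1}^m G` of a set `G ⊆ [0,1]²`. -/
def MahavierFin (G : Set (unitInterval × unitInterval)) (m : ℕ) :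
    Set (Fin (m + 1) → unitInterval) :=
  {x | ∀ i : Fin m, (x i.castSucc, x i.succ) ∈ G}

/-- The infinite Mahavier product `⋆_{i=1}^∞ G` of a set `G ⊆ [0,1]²`. -/
def MahavierInf (G : Set (unitInterval × unitInterval)) : Set (ℕ → unitInterval) :=
  {x | ∀ i : ℕ, (x i, x (i + 1)) ∈ G}

/-- The `m`-fold Mahavier product of `H ⊆ [0,1]^{N+1}`, a subset of `[0,1]^{mN+1}`. -/
def MahavierFinN (N : ℕ) (H : Set (Fin (N + 1) → unitInterval)) (m : ℕ) :
    Set (Fin (m * N + 1) → unitInterval) :=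
  {x | ∀ j : Fin m, (fun i : Fin (N + 1) =>
      x ⟨j.1 * N + i.1, by
        have hi : i.1 ≤ N := Nat.lt_succ_iff.mp i.2
        have hj : j.1 + 1 ≤ m := j.2
        have h : (j.1 + 1) * N ≤ m * N := Nat.mul_le_mul_right N hj
        have h2 : (j.1 + 1) * N = j.1 * N + N := by ring
        omega⟩) ∈ H}

/-- The infinite Mahavier product of `H ⊆ [0,1]^{N+1}`. -/
def MahavierInfN (N : ℕ) (H : Set (Fin (N + 1) → unitInterval)) :
    Set (ℕ → unitInterval) :=
  {x | ∀ j : ℕ, (fun i : Fin (N + 1) => x (j * N + i.1)) ∈ H}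

/-- The least cardinality of a subcollection of `U` covering `K`. -/
def coverNum {X : Type*} (K : Set X) (U : Set (Set X)) : ℕ :=
  sInf {n | ∃ F : Finset (Set X), ↑F ⊆ U ∧ F.card = n ∧ K ⊆ ⋃₀ ↑F}

/-- `α` is a minimal finite cover of `[0,1]` by open intervals: every member is open in
`[0,1]` and order-connected (an interval), `α` covers `[0,1]`, and no proper
subcollection of `α` covers `[0,1]`. -/
def IsMinimalIntervalCover (α : Finset (Set unitInterval)) : Prop :=
  (∀ u ∈ α, IsOpen u ∧ u.OrdConnected) ∧
  (⋃₀ (α : Set (Set unitInterval)) = Set.univ) ∧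
  ∀ β : Finset (Set unitInterval), β ⊆ α →
    ⋃₀ (β : Set (Set unitInterval)) = Set.univ → β = α

/-- The grid cover `α^k` of `[0,1]^k`: all products of `k` members of `α`. -/
def gridCover (α : Finset (Set unitInterval)) (k : ℕ) :
    Set (Set (Fin k → unitInterval)) :=
  {s | ∃ f : Fin k → Set unitInterval, (∀ i, f i ∈ α) ∧ s = {x | ∀ i, x i ∈ f i}}

/-- Entropy of `G ⊆ [0,1]²` relative to the cover `α`: the limit (realized as a `limsup`)
of `(1/m) log N(⋆_{i=1}^m G, α^{m+1})` if `⋆_{i=1}^∞ G ≠ ∅`, and `0` otherwise. -/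
def entOf (G : Set (unitInterval × unitInterval))
    (α : Finset (Set unitInterval)) : ENNReal :=
  if (MahavierInf G).Nonempty then
    Filter.limsup (fun m : ℕ =>
      ENNReal.ofReal
        (Real.log (coverNum (MahavierFin G m) (gridCover α (m + 1))) / m))
      Filter.atTop
  else 0

/-- Topological entropy of `G ⊆ [0,1]²`: the supremum of `entOf G α` over all minimal
open interval covers `α` of `[0,1]`. -/
def ent (G : Set (unitInterval × unitInterval)) : ENNReal :=
  ⨆ α : {α : Finset (Set unitInterval) // IsMinimalIntervalCover α}, entOf G α.1

/-- Entropy of `H ⊆ [0,1]^{N+1}` relative to the cover `α`. -/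
def entOfN (N : ℕ) (H : Set (Fin (N + 1) → unitInterval))
    (α : Finset (Set unitInterval)) : ENNReal :=
  if (MahavierInfN N H).Nonempty then
    Filter.limsup (fun m : ℕ =>
      ENNReal.ofReal
        (Real.log (coverNum (MahavierFinN N H m) (gridCover α (m * N + 1))) / m))
      Filter.atTop
  else 0

/-- Topological entropy of `H ⊆ [0,1]^{N+1}`. -/
def entN (N : ℕ) (H : Set (Fin (N + 1) → unitInterval)) : ENNReal :=
  ⨆ α : {α : Finset (Set unitInterval) // IsMinimalIntervalCover α}, entOfN N H α.1

/-- An open cover of a topological space. -/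
def IsOpenCover {X : Type*} [TopologicalSpace X] (U : Set (Set X)) : Prop :=
  (∀ u ∈ U, IsOpen u) ∧ ⋃₀ U = Set.univ

/-- The join `U ∨ T⁻¹U ∨ ⋯ ∨ T⁻ⁿU` of the open cover `U` under the map `T`. -/
def dynJoin {X : Type*} (T : X → X) (U : Set (Set X)) (n : ℕ) : Set (Set X) :=
  {s | ∃ f : Fin (n + 1) → Set X, (∀ i, f i ∈ U) ∧ s = ⋂ i, T^[i.1] ⁻¹' f i}

/-- The Adler–Konheim–McAndrew topological entropy of `T : X → X`: the supremum over all
open covers `U` of `X` of `lim (1/n) log N(X, U ∨ T⁻¹U ∨ ⋯ ∨ T⁻ⁿU)` (as a `limsup`). -/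
def akmEntropy {X : Type*} [TopologicalSpace X] (T : X → X) : ENNReal :=
  ⨆ U : {U : Set (Set X) // IsOpenCover U},
    Filter.limsup (fun n : ℕ =>
      ENNReal.ofReal (Real.log (coverNum Set.univ (dynJoin T U.1 n)) / n))
      Filter.atTop

/-!
The backward orbit `t ↦ (fᵐ t, …, f t, t)` maps `[0,1]` onto the Mahavier product `⋆ᵐ G`, and a
box `a₀ × ⋯ × aₘ` pulls back along it to the dynamical cell `⋂ᵢ f⁻ⁱ aₘ₋ᵢ`. Hence
`N(⋆ᵐ G, αᵐ⁺¹) = N([0,1], α ∨ f⁻¹α ∨ ⋯ ∨ f⁻ᵐα)` for every cover `α`, i.e. `ent(G, α)` is the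
AKM entropy of `f` relative to `α` (surjectivity of `f` makes `⋆^∞ G` nonempty). By the Lebesgue
number lemma every open cover of `[0,1]` is refined by a minimal cover by balls, which are
intervals, and refining a cover can only increase its entropy; so the two suprema agree.
-/
section CoverNum

variable {X Y : Type*}

theorem coverNum_le_of_comap {K : Set X} {L : Set Y} {U : Set (Set X)} {V : Set (Set Y)}
    (g : Y → X) (hg : MapsTo g L K) (hUV : ∀ s ∈ U, ∃ t ∈ V, L ∩ g ⁻¹' s ⊆ t)
    (hU : U.Finite) (hKU : K ⊆ ⋃₀ U) : coverNum L V ≤ coverNum K U := by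
  choose! φ hφV hφ using hUV
  have hne : {n | ∃ F : Finset (Set X), ↑F ⊆ U ∧ F.card = n ∧ K ⊆ ⋃₀ ↑F}.Nonempty :=
    ⟨_, hU.toFinset, by simp, rfl, by simpa using hKU⟩
  obtain ⟨F, hFU, hFcard, hKF⟩ := Nat.sInf_mem hne
  have hcover : coverNum L V ≤ (F.image φ).card := Nat.sInf_le ⟨F.image φ, ?_, rfl, ?_⟩
  · exact hcover.trans (Finset.card_image_le.trans_eq hFcard)
  · simpa [Set.subset_def] using fun s hs => hφV s (hFU hs)
  · intro y hy
    obtain ⟨s, hsF, hys⟩ := hKF (hg hy)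
    exact ⟨φ s, by simpa using ⟨s, hsF, rfl⟩, hφ s (hFU hsF) ⟨hy, hys⟩⟩

theorem dynJoin_finite (T : X → X) {U : Set (Set X)} (hU : U.Finite) (n : ℕ) :
    (dynJoin T U n).Finite := by
  refine ((Set.Finite.pi fun _ => hU).image fun a => ⋂ i : Fin (n + 1), T^[i] ⁻¹' a i).subset ?_
  rintro s ⟨a, ha, rfl⟩
  exact ⟨a, fun i _ => ha i, rfl⟩

theorem sUnion_dynJoin (T : X → X) {U : Set (Set X)} (hU : ⋃₀ U = univ) (n : ℕ) :
    ⋃₀ dynJoin T U n = univ := by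
  refine eq_univ_of_forall fun x => ?_
  choose a haU hxa using fun i : Fin (n + 1) => hU ▸ mem_univ (T^[i] x)
  exact ⟨_, ⟨a, haU, rfl⟩, mem_iInter.2 hxa⟩

theorem gridCover_finite (α : Finset (Set unitInterval)) (k : ℕ) : (gridCover α k).Finite := by
  refine ((Set.Finite.pi fun _ => α.finite_toSet).image
    fun a => {x : Fin k → unitInterval | ∀ i, x i ∈ a i}).subset ?_
  rintro s ⟨a, ha, rfl⟩
  exact ⟨a, fun i _ => ha i, rfl⟩

theorem sUnion_gridCover {α : Finset (Set unitInterval)}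
    (hα : ⋃₀ (α : Set (Set unitInterval)) = univ) (k : ℕ) : ⋃₀ gridCover α k = univ := by
  refine eq_univ_of_forall fun x => ?_
  choose a haα hxa using fun i : Fin k => hα ▸ mem_univ (x i)
  exact ⟨_, ⟨a, haα, rfl⟩, hxa⟩

end CoverNum

theorem Real.log_natCast_le_log_natCast {a b : ℕ} (h : a ≤ b) : Real.log a ≤ Real.log b := by
  rcases a.eq_zero_or_pos with rfl | ha
  · simpa using Real.log_natCast_nonneg b
  · exact Real.log_le_log (by exact_mod_cast ha) (by exact_mod_cast h)

theorem limsup_ofReal_log_div_le {a b : ℕ → ℕ} (h : ∀ n, a n ≤ b n) :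
    limsup (fun n : ℕ => ENNReal.ofReal (Real.log (a n) / n)) atTop ≤
      limsup (fun n : ℕ => ENNReal.ofReal (Real.log (b n) / n)) atTop :=
  limsup_le_limsup <| .of_forall fun n => ENNReal.ofReal_le_ofReal <|
    div_le_div_of_nonneg_right (Real.log_natCast_le_log_natCast (h n)) n.cast_nonneg

section CoverEntropy

variable {X : Type*}

def coverEntropy (T : X → X) (U : Set (Set X)) : ENNReal :=
  limsup (fun n : ℕ => ENNReal.ofReal (Real.log (coverNum univ (dynJoin T U n)) / n)) atTop

theorem coverNum_dynJoin_le_of_refines (T : X → X) {U V : Set (Set X)} (hV : V.Finite)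
    (hVcov : ⋃₀ V = univ) (hVU : ∀ v ∈ V, ∃ u ∈ U, v ⊆ u) (n : ℕ) :
    coverNum univ (dynJoin T U n) ≤ coverNum univ (dynJoin T V n) := by
  refine coverNum_le_of_comap id (mapsTo_univ _ _) ?_ (dynJoin_finite T hV n)
    (sUnion_dynJoin T hVcov n).ge
  rintro _ ⟨v, hv, rfl⟩
  choose u hu hvu using fun i => hVU (v i) (hv i)
  exact ⟨_, ⟨u, hu, rfl⟩, fun x ⟨_, hx⟩ => mem_iInter.2 fun i => hvu i (mem_iInter.1 hx i)⟩

theorem coverEntropy_le_of_refines (T : X → X) {U V : Set (Set X)} (hV : V.Finite)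
    (hVcov : ⋃₀ V = univ) (hVU : ∀ v ∈ V, ∃ u ∈ U, v ⊆ u) :
    coverEntropy T U ≤ coverEntropy T V :=
  limsup_ofReal_log_div_le (coverNum_dynJoin_le_of_refines T hV hVcov hVU)

end CoverEntropy

theorem Finset.exists_minimal_subcover {X : Type*} {β : Finset (Set X)}
    (hβ : ⋃₀ (β : Set (Set X)) = Set.univ) :
    ∃ γ ⊆ β, ⋃₀ (γ : Set (Set X)) = Set.univ ∧
      ∀ δ ⊆ γ, ⋃₀ (δ : Set (Set X)) = Set.univ → δ = γ := by
  obtain ⟨γ, hγβ, hγ⟩ := exists_minimal_le_of_wellFoundedLT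
    (fun γ : Finset (Set X) => ⋃₀ (γ : Set (Set X)) = Set.univ) β hβ
  exact ⟨γ, hγβ, hγ.prop, fun δ hδγ hδ => hγ.eq_of_le hδ hδγ⟩

theorem unitInterval.ordConnected_ball (c : unitInterval) (r : ℝ) :
    (Metric.ball c r).OrdConnected := by
  have hball : Metric.ball c r = Subtype.val ⁻¹' Metric.ball (c : ℝ) r := rfl
  rw [hball, Real.ball_eq_Ioo]
  exact ordConnected_Ioo.preimage_mono (Subtype.mono_coe _)

theorem exists_minimalIntervalCover_refines {U : Set (Set unitInterval)} (hU : IsOpenCover U) :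
    ∃ α, IsMinimalIntervalCover α ∧ ∀ a ∈ (α : Set (Set unitInterval)), ∃ u ∈ U, a ⊆ u := by
  obtain ⟨δ, hδ, hδU⟩ := lebesgue_number_lemma_of_metric_sUnion isCompact_univ hU.1 hU.2.ge
  obtain ⟨t, -, ht⟩ :=
    isCompact_univ.elim_nhds_subcover (fun x : unitInterval => Metric.ball x δ)
      fun x _ => Metric.ball_mem_nhds x hδ
  have hballs : ⋃₀ ((t.image (Metric.ball · δ) : Finset _) : Set (Set unitInterval)) = univ := by
    simpa [sUnion_image, eq_univ_iff_forall] using ht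
  obtain ⟨α, hαt, hα, hαmin⟩ := Finset.exists_minimal_subcover hballs
  have hα_ball : ∀ a ∈ α, ∃ c, a = Metric.ball c δ := fun a ha => by
    obtain ⟨c, -, rfl⟩ := Finset.mem_image.1 (hαt ha)
    exact ⟨c, rfl⟩
  refine ⟨α, ⟨fun a ha => ?_, hα, hαmin⟩, fun a ha => ?_⟩
  · obtain ⟨c, rfl⟩ := hα_ball a ha
    exact ⟨Metric.isOpen_ball, unitInterval.ordConnected_ball c δ⟩
  · obtain ⟨c, rfl⟩ := hα_ball a ha
    exact hδU c (mem_univ c)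

section InvGraph

variable (f : unitInterval → unitInterval)

def invGraph : Set (unitInterval × unitInterval) := {p | ∃ t, p = (f t, t)}

theorem mk_mem_invGraph {a b : unitInterval} : (a, b) ∈ invGraph f ↔ a = f b := by
  simp [invGraph, Prod.ext_iff]

def backwardOrbit (m : ℕ) (t : unitInterval) : Fin (m + 1) → unitInterval :=
  fun i => f^[m - i] t

theorem backwardOrbit_rev (m : ℕ) (t : unitInterval) (i : Fin (m + 1)) :
    backwardOrbit f m t i.rev = f^[i] t := by
  simp only [backwardOrbit, Fin.val_rev]
  congr 1
  omega

theorem backwardOrbit_last (m : ℕ) (t : unitInterval) : backwardOrbit f m t (Fin.last m) = t := by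
  simp [backwardOrbit]

theorem backwardOrbit_castSucc (m : ℕ) (t : unitInterval) (i : Fin m) :
    backwardOrbit f m t i.castSucc = f (backwardOrbit f m t i.succ) := by
  simp only [backwardOrbit, Fin.val_castSucc, Fin.val_succ]
  rw [← Function.iterate_succ_apply' f]
  congr 1
  omega

theorem mahavierFin_invGraph (m : ℕ) :
    MahavierFin (invGraph f) m = range (backwardOrbit f m) := by
  refine Subset.antisymm (fun x hx => ⟨x (Fin.last m), funext fun i => ?_⟩) ?_
  · induction i using Fin.reverseInduction with
    | last => rw [backwardOrbit_last]
    | cast i ih => rw [backwardOrbit_castSucc, ih, (mk_mem_invGraph f).1 (hx i)]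
  · rintro _ ⟨t, rfl⟩ i
    exact (mk_mem_invGraph f).2 (backwardOrbit_castSucc f m t i)

theorem mahavierInf_invGraph_nonempty (hf : Function.Surjective f) :
    (MahavierInf (invGraph f)).Nonempty := by
  choose g hg using hf
  refine ⟨fun n => g^[n] 0, fun i => (mk_mem_invGraph f).2 ?_⟩
  show g^[i] 0 = f (g^[i + 1] 0)
  rw [Function.iterate_succ_apply', hg]

theorem coverNum_mahavierFin_invGraph {α : Finset (Set unitInterval)}
    (hα : ⋃₀ (α : Set (Set unitInterval)) = univ) (m : ℕ) :
    coverNum (MahavierFin (invGraph f) m) (gridCover α (m + 1)) =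
      coverNum univ (dynJoin f α m) := by
  rw [mahavierFin_invGraph]
  apply le_antisymm
  · refine coverNum_le_of_comap (· (Fin.last m)) (mapsTo_univ _ _) ?_
      (dynJoin_finite f α.finite_toSet m) (sUnion_dynJoin f hα m).ge
    rintro _ ⟨a, ha, rfl⟩
    refine ⟨_, ⟨fun i => a i.rev, fun i => ha _, rfl⟩, ?_⟩
    rintro _ ⟨⟨t, rfl⟩, ht⟩ i
    have hi : f^[i.rev] t ∈ a i.rev := by simpa [backwardOrbit_last] using mem_iInter.1 ht i.rev
    rwa [← backwardOrbit_rev, Fin.rev_rev] at hi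
  · refine coverNum_le_of_comap (backwardOrbit f m) (fun t _ => mem_range_self t) ?_
      (gridCover_finite α _) ((subset_univ _).trans (sUnion_gridCover hα _).ge)
    rintro _ ⟨a, ha, rfl⟩
    refine ⟨_, ⟨fun i => a i.rev, fun i => ha _, rfl⟩, ?_⟩
    rintro t ⟨-, ht⟩
    refine mem_iInter.2 fun i => ?_
    rw [mem_preimage, ← backwardOrbit_rev]
    exact ht i.rev

theorem entOf_invGraph (hf : Function.Surjective f) {α : Finset (Set unitInterval)}
    (hα : ⋃₀ (α : Set (Set unitInterval)) = univ) :
    entOf (invGraph f) α = coverEntropy f α := by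
  simp only [entOf, if_pos (mahavierInf_invGraph_nonempty f hf),
    coverNum_mahavierFin_invGraph f hα, coverEntropy]

end InvGraph

theorem akmEntropy_eq_ent_graph_inv_general
    (f : unitInterval → unitInterval)
    (hsurj : Function.Surjective f) :
    akmEntropy f = ent {p : unitInterval × unitInterval | ∃ t, p = (f t, t)} := by
  change ⨆ U : {U // IsOpenCover U}, coverEntropy f U.1 = ent (invGraph f)
  refine le_antisymm (iSup_le fun ⟨U, hU⟩ => ?_) (iSup_le fun ⟨α, hα⟩ => ?_)
  · obtain ⟨α, hα, hαU⟩ := exists_minimalIntervalCover_refines hU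
    calc coverEntropy f U ≤ coverEntropy f α :=
          coverEntropy_le_of_refines f α.finite_toSet hα.2.1 hαU
      _ = entOf (invGraph f) α := (entOf_invGraph f hsurj hα.2.1).symm
      _ ≤ ent (invGraph f) :=
          le_iSup (fun α : {α // IsMinimalIntervalCover α} => entOf (invGraph f) α.1) ⟨α, hα⟩
  · rw [entOf_invGraph f hsurj hα.2.1]
    have hαU : IsOpenCover (α : Set (Set unitInterval)) := ⟨fun u hu => (hα.1 u hu).1, hα.2.1⟩
    exact le_iSup (fun U : {U // IsOpenCover U} => coverEntropy f U.1) ⟨α, hαU⟩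

/-- If `f : [0,1] → [0,1]` is a continuous surjection and `G` is the graph
of `f⁻¹`, then the Adler–Konheim–McAndrew entropy `h(f)` equals `ent(G)`. -/
theorem akmEntropy_eq_ent_graph_inv
    (f : unitInterval → unitInterval) (hf : Continuous f)
    (hsurj : Function.Surjective f) :
    akmEntropy f = ent {p : unitInterval × unitInterval | ∃ t, p = (f t, t)} :=
  akmEntropy_eq_ent_graph_inv_general f hsurj
end
end

section
/- Let G = ([0,1] × {0}) ∪ {(x, 1−x) : x ∈ [0,1]} ⊆ [0,1]². Then ent(G) = log((1+√5)/2), the logarithm of the golden ratio. -/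
open Set Filter Topology unitInterval
open scoped Classical

noncomputable section

/-!
A point `x` of `⋆_{i=1}^m G` satisfies `x (i+1) = 0` or `x (i+1) = 1 - x i` at every step. Once
a coordinate lies in `{0, 1}` all later ones do, and before that the point alternates between
`x 0` and `1 - x 0`; after it, the coordinates form a 0-1 word with no two consecutive `1`s
(a `1` can only follow a `0`). So for any cover `α`, the product `⋆_{i=1}^m G` is covered by
`(m + 2) F_{m+3} |α|²` boxes of `α^{m+1}`, one for each switching time, golden mean word and pair
of members of `α` containing `x 0` and `1 - x 0`. Conversely all `F_{m+3}` such 0-1 words lie in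
`⋆_{i=1}^m G`, and for `α = {[0, 2/3), (1/3, 1]}` no box contains two of them. As `F_n` grows like
`φ ^ n`, both bounds give the entropy `log φ`.
-/

open Finset Real goldenRatio

theorem limsup_log_div_le_of_le_mul_pow {u : ℕ → ℕ} {C r : ℝ} (hr : 0 < r)
    (hu : ∀ᶠ m in atTop, (u m : ℝ) ≤ C * m * r ^ m) :
    limsup (fun m => ENNReal.ofReal (log (u m) / m)) atTop ≤ ENNReal.ofReal (log r) := by
  have hlim : Tendsto (fun m : ℕ => log C / m + log m / m + log r) atTop (𝓝 (log r)) := by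
    simpa using ((tendsto_const_div_atTop_nhds_zero_nat (log C)).add
      (isLittleO_log_id_atTop.tendsto_div_nhds_zero.comp tendsto_natCast_atTop_atTop)).add_const
      (log r)
  refine (limsup_le_limsup ?_).trans (ENNReal.tendsto_ofReal hlim).limsup_eq.le
  filter_upwards [hu, eventually_gt_atTop 0] with m hum hm
  rcases (u m).eq_zero_or_pos with h0 | hpos
  · simp [h0]
  refine ENNReal.ofReal_le_ofReal ?_
  have hm' : (0 : ℝ) < m := Nat.cast_pos.mpr hm
  have hupos : (0 : ℝ) < u m := Nat.cast_pos.mpr hpos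
  have hC : 0 < C :=
    pos_of_mul_pos_left (pos_of_mul_pos_left (hupos.trans_le hum) (pow_pos hr m).le) hm'.le
  calc log (u m) / m ≤ log (C * m * r ^ m) / m := by gcongr
    _ = log C / m + log m / m + log r := by
      rw [log_mul (by positivity) (by positivity), log_mul hC.ne' hm'.ne', log_pow]
      field_simp

theorem log_le_limsup_log_div_of_pow_le {u : ℕ → ℕ} {r : ℝ} (hr : 0 < r)
    (hu : ∀ᶠ m in atTop, r ^ m ≤ u m) :
    ENNReal.ofReal (log r) ≤ limsup (fun m => ENNReal.ofReal (log (u m) / m)) atTop := by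
  refine (limsup_const _).symm.le.trans (limsup_le_limsup ?_)
  filter_upwards [hu, eventually_gt_atTop 0] with m hum hm
  refine ENNReal.ofReal_le_ofReal ?_
  have hm' : (0 : ℝ) < m := Nat.cast_pos.mpr hm
  rw [le_div_iff₀ hm', mul_comm, ← log_pow]
  exact log_le_log (pow_pos hr m) hum

theorem fib_succ_le_goldenRatio_pow (n : ℕ) : (Nat.fib (n + 1) : ℝ) ≤ φ ^ n := by
  have h := goldenRatio_mul_fib_succ_add_fib n
  have : φ * Nat.fib (n + 1) ≤ φ * φ ^ n := by
    rw [← pow_succ']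
    linarith [(Nat.fib n).cast_nonneg (α := ℝ)]
  exact le_of_mul_le_mul_left this goldenRatio_pos

theorem goldenRatio_pow_le_fib (n : ℕ) : φ ^ n ≤ Nat.fib (n + 2) := by
  have h := fib_succ_sub_goldenConj_mul_fib n
  have hψ : -1 < ψ := neg_one_lt_goldenConj
  have hψ' : ψ < 0 := goldenConj_neg
  rw [Nat.fib_add_two, Nat.cast_add]
  nlinarith [(Nat.fib n).cast_nonneg (α := ℝ)]

section CoverNum

variable {X : Type*} {K : Set X} {U : Set (Set X)}

theorem coverNum_le_card {F : Finset (Set X)} (hFU : ↑F ⊆ U) (hKF : K ⊆ ⋃₀ ↑F) :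
    coverNum K U ≤ #F :=
  Nat.sInf_le ⟨F, hFU, rfl, hKF⟩

theorem card_le_coverNum {S : Finset X} (hSK : ↑S ⊆ K)
    (hsep : ∀ u ∈ U, ∀ x ∈ S, ∀ y ∈ S, x ∈ u → y ∈ u → x = y)
    (hcov : ∃ F : Finset (Set X), ↑F ⊆ U ∧ K ⊆ ⋃₀ ↑F) : #S ≤ coverNum K U := by
  obtain ⟨F, hFU, hFcard, hKF⟩ : coverNum K U ∈
      {n | ∃ F : Finset (Set X), ↑F ⊆ U ∧ F.card = n ∧ K ⊆ ⋃₀ ↑F} :=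
    Nat.sInf_mem (by obtain ⟨F, hFU, hKF⟩ := hcov; exact ⟨_, F, hFU, rfl, hKF⟩)
  have hS : S ⊆ F.biUnion fun u => {x ∈ S | x ∈ u} := by
    intro x hx
    obtain ⟨u, hu, hxu⟩ := hKF (hSK hx)
    exact mem_biUnion.mpr ⟨u, hu, mem_filter.mpr ⟨hx, hxu⟩⟩
  calc #S ≤ #F * 1 := (Finset.card_le_card hS).trans (card_biUnion_le_card_mul _ _ 1 fun u hu =>
        card_le_one.mpr fun x hx y hy => by
          rw [mem_filter] at hx hy
          exact hsep u (hFU hu) x hx.1 y hy.1 hx.2 hy.2)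
    _ = coverNum K U := by rw [mul_one, hFcard]

end CoverNum

def goldenWords (n : ℕ) : Finset (Fin n → Bool) :=
  {w | (List.ofFn w).IsChain fun a b => a = false ∨ b = false}

theorem mem_goldenWords_iff {n : ℕ} {w : Fin (n + 1) → Bool} :
    w ∈ goldenWords (n + 1) ↔ ∀ i : Fin n, w i.castSucc = false ∨ w i.succ = false := by
  simp only [goldenWords, mem_filter, Finset.mem_univ, true_and, List.isChain_ofFn]
  exact ⟨fun h i => h i (Nat.succ_lt_succ i.2), fun h i hi => h ⟨i, by omega⟩⟩

theorem cons_false_mem_goldenWords {n : ℕ} {w : Fin n → Bool} :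
    Fin.cons false w ∈ goldenWords (n + 1) ↔ w ∈ goldenWords n := by
  simp [goldenWords, List.isChain_cons]

theorem cons_mem_goldenWords {n : ℕ} {a : Bool} {w : Fin (n + 1) → Bool} :
    Fin.cons a w ∈ goldenWords (n + 2) ↔
      (a = false ∨ w 0 = false) ∧ w ∈ goldenWords (n + 1) := by
  simp [goldenWords, List.isChain_cons_cons]

theorem goldenWords_add_two (n : ℕ) :
    goldenWords (n + 2) = (goldenWords (n + 1)).image (Fin.cons false) ∪
      (goldenWords n).image fun w => Fin.cons true (Fin.cons false w) := by
  ext w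
  induction w using Fin.consCases with | cons a w =>
  induction w using Fin.consCases with | cons b w =>
  cases a <;> cases b <;> simp [cons_mem_goldenWords, cons_false_mem_goldenWords, Fin.cons_inj]

theorem card_goldenWords (n : ℕ) : #(goldenWords n) = Nat.fib (n + 2) := by
  induction n using Nat.twoStepInduction with
  | zero => rfl
  | one => rfl
  | more n ih₀ ih₁ =>
    have hinj : Function.Injective fun w : Fin n → Bool =>
        (Fin.cons true (Fin.cons false w : Fin (n + 1) → Bool) : Fin (n + 2) → Bool) :=
      (Fin.cons_right_injective _).comp (Fin.cons_right_injective _)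
    rw [goldenWords_add_two, card_union_of_disjoint,
      Finset.card_image_of_injective _ (Fin.cons_right_injective _),
      Finset.card_image_of_injective _ hinj, ih₀, ih₁, Nat.fib_add_two (n := n + 2), add_comm]
    simp [Finset.disjoint_left, Fin.cons_inj]

section MariborMonster

variable {m : ℕ} {x : Fin (m + 1) → I}

def mariborMonster : Set (I × I) :=
  {p | (p.2 : ℝ) = 0} ∪ {p | (p.2 : ℝ) = 1 - (p.1 : ℝ)}

theorem mem_mariborMonster {p : I × I} : p ∈ mariborMonster ↔ p.2 = 0 ∨ p.2 = σ p.1 := by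
  simp only [mariborMonster, Set.mem_union, Set.mem_ofPred_eq, Subtype.ext_iff, coe_symm_eq,
    Icc.coe_zero]

theorem mariborMonster_succ_eq_zero_or_eq_symm
    (hx : x ∈ MahavierFin mariborMonster m) (i : Fin m) :
    x i.succ = 0 ∨ x i.succ = σ (x i.castSucc) :=
  mem_mariborMonster.1 (hx i)

theorem mahavierInf_mariborMonster_nonempty : (MahavierInf mariborMonster).Nonempty :=
  ⟨fun _ => 0, fun _ => mem_mariborMonster.2 (Or.inl rfl)⟩

theorem mariborMonster_binary_of_le (hx : x ∈ MahavierFin mariborMonster m) {i j : Fin (m + 1)}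
    (hij : i ≤ j) (hi : x i = 0 ∨ x i = 1) : x j = 0 ∨ x j = 1 := by
  induction j using Fin.induction with
  | zero => rwa [← nonpos_iff_eq_zero.1 hij]
  | succ j ih =>
    rcases hij.eq_or_lt with rfl | hlt
    · exact hi
    rcases mariborMonster_succ_eq_zero_or_eq_symm hx j with h | h
    · exact Or.inl h
    · rw [h]
      rcases ih (Fin.le_castSucc_iff.2 hlt) with h' | h' <;> simp [h']

theorem mariborMonster_eq_ite_even_of_not_binary (hx : x ∈ MahavierFin mariborMonster m)
    (i : Fin (m + 1)) (hi : ¬(x i = 0 ∨ x i = 1)) :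
    x i = if Even (i : ℕ) then x 0 else σ (x 0) := by
  induction i using Fin.induction with
  | zero => simp
  | succ i ih =>
    rcases mariborMonster_succ_eq_zero_or_eq_symm hx i with h | h
    · exact absurd (Or.inl h) hi
    have hprev : ¬(x i.castSucc = 0 ∨ x i.castSucc = 1) := by
      rintro (h' | h') <;> simp [h, h', symm_zero, symm_one] at hi
    rw [h, ih hprev]
    simp only [Fin.val_succ, Fin.val_castSucc, Nat.even_add_one]
    split_ifs <;> simp [symm_symm]

def binaryPoint {n : ℕ} (w : Fin n → Bool) : Fin n → I := fun i => if w i then 1 else 0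

theorem binaryPoint_injective {n : ℕ} : Function.Injective (binaryPoint (n := n)) := by
  intro v w h
  funext i
  have := congrFun h i
  cases hv : v i <;> cases hw : w i <;> simp_all [binaryPoint]

theorem binaryPoint_mem_mahavierFin_iff {w : Fin (m + 1) → Bool} :
    binaryPoint w ∈ MahavierFin mariborMonster m ↔ w ∈ goldenWords (m + 1) := by
  rw [mem_goldenWords_iff]
  refine forall_congr' fun i => ?_
  rw [mem_mariborMonster]
  cases hc : w i.castSucc <;> cases hs : w i.succ <;>
    simp [binaryPoint, hc, hs, symm_zero, symm_one]

theorem mariborMonster_alternating_then_binary (hx : x ∈ MahavierFin mariborMonster m) :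
    ∃ k ≤ m + 1, ∃ w ∈ goldenWords (m + 1), ∀ i : Fin (m + 1),
      ((i : ℕ) < k → x i = if Even (i : ℕ) then x 0 else σ (x 0)) ∧
      (k ≤ (i : ℕ) → x i = binaryPoint w i) := by
  classical
  have hex : ∃ k, ∀ i : Fin (m + 1), k ≤ (i : ℕ) → x i = 0 ∨ x i = 1 :=
    ⟨m + 1, fun i hi => absurd i.2 (by omega)⟩
  refine ⟨Nat.find hex, Nat.find_min' hex fun i hi => absurd i.2 (by omega),
    fun i => decide (x i = 1), ?_, fun i => ⟨fun hik => ?_, fun hki => ?_⟩⟩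
  · refine mem_goldenWords_iff.2 fun i => ?_
    rcases mariborMonster_succ_eq_zero_or_eq_symm hx i with h | h
    · simp [h]
    · by_cases h1 : x i.castSucc = 1 <;> simp [h, h1, symm_one]
  · refine mariborMonster_eq_ite_even_of_not_binary hx i fun hb =>
      Nat.find_min hex hik fun j hj => ?_
    exact mariborMonster_binary_of_le hx (Fin.le_iff_val_le_val.2 hj) hb
  · rcases Nat.find_spec hex i hki with h | h <;> simp [binaryPoint, h]

end MariborMonster

section Covers

variable {α : Finset (Set I)}

theorem exists_gridCover_covering_mahavierFin (hα : ⋃₀ (α : Set (Set I)) = univ) (m : ℕ) :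
    ∃ F : Finset (Set (Fin (m + 1) → I)), ↑F ⊆ gridCover α (m + 1) ∧
      MahavierFin mariborMonster m ⊆ ⋃₀ ↑F ∧
      #F ≤ (m + 2) * Nat.fib (m + 3) * #α ^ 2 := by
  choose cell hcellα hmem using Set.sUnion_eq_univ_iff.1 hα
  let side (q : ℕ × (Fin (m + 1) → Bool) × Set I × Set I) (i : Fin (m + 1)) : Set I :=
    if (i : ℕ) < q.1 then (if Even (i : ℕ) then q.2.2.1 else q.2.2.2)
    else cell (binaryPoint q.2.1 i)
  let box q : Set (Fin (m + 1) → I) := {y | ∀ i, y i ∈ side q i}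
  let indices := range (m + 2) ×ˢ goldenWords (m + 1) ×ˢ α ×ˢ α
  refine ⟨indices.image box, ?_, ?_, ?_⟩
  · simp only [coe_image, Set.image_subset_iff]
    rintro ⟨k, w, u, v⟩ hq
    simp only [indices, coe_product, Set.mem_prod, mem_coe] at hq
    refine ⟨side (k, w, u, v), fun i => ?_, rfl⟩
    dsimp only [side]
    split_ifs
    exacts [hq.2.2.1, hq.2.2.2, hcellα _]
  · intro x hx
    obtain ⟨k, hk, w, hw, hxw⟩ := mariborMonster_alternating_then_binary hx
    refine ⟨box (k, w, cell (x 0), cell (σ (x 0))), mem_coe.2 (mem_image_of_mem _ ?_),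
      fun i => ?_⟩
    · simp only [indices, mem_product, Finset.mem_range]
      exact ⟨Nat.lt_succ_of_le hk, hw, hcellα _, hcellα _⟩
    · dsimp only [side]
      split_ifs with hik he
      · rw [(hxw i).1 hik, if_pos he]; exact hmem _
      · rw [(hxw i).1 hik, if_neg he]; exact hmem _
      · rw [(hxw i).2 (not_lt.1 hik)]; exact hmem _
  · calc #(indices.image box) ≤ #indices := card_image_le
      _ = (m + 2) * Nat.fib (m + 3) * #α ^ 2 := by simp [indices, card_goldenWords]; ring

theorem coverNum_mahavierFin_le (hα : ⋃₀ (α : Set (Set I)) = univ) (m : ℕ) :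
    coverNum (MahavierFin mariborMonster m) (gridCover α (m + 1)) ≤
      (m + 2) * Nat.fib (m + 3) * #α ^ 2 :=
  have ⟨_, hFU, hKF, hF⟩ := exists_gridCover_covering_mahavierFin hα m
  (coverNum_le_card hFU hKF).trans hF

theorem binaryPoint_eq_of_mem_gridCover (hsep : ∀ u ∈ α, (0 : I) ∈ u → (1 : I) ∉ u)
    {k : ℕ} {s : Set (Fin k → I)} (hs : s ∈ gridCover α k) {v w : Fin k → Bool}
    (hv : binaryPoint v ∈ s) (hw : binaryPoint w ∈ s) : v = w := by
  obtain ⟨f, hf, rfl⟩ := hs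
  funext i
  have hvi := hv i
  have hwi := hw i
  cases hvi' : v i <;> cases hwi' : w i <;> simp only [binaryPoint, hvi', hwi'] at hvi hwi
  exacts [rfl, absurd hwi (hsep _ (hf i) hvi), absurd hvi (hsep _ (hf i) hwi), rfl]

theorem fib_le_coverNum_mahavierFin (hα : ⋃₀ (α : Set (Set I)) = univ)
    (hsep : ∀ u ∈ α, (0 : I) ∈ u → (1 : I) ∉ u) (m : ℕ) :
    Nat.fib (m + 3) ≤ coverNum (MahavierFin mariborMonster m) (gridCover α (m + 1)) := by
  obtain ⟨F, hFU, hKF, -⟩ := exists_gridCover_covering_mahavierFin hα m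
  rw [← card_goldenWords, ← card_image_of_injective _ binaryPoint_injective]
  refine card_le_coverNum ?_ ?_ ⟨F, hFU, hKF⟩
  · simp only [coe_image, Set.image_subset_iff]
    exact fun w hw => binaryPoint_mem_mahavierFin_iff.2 hw
  · rintro s hs _ hv' _ hw' hv hw
    obtain ⟨v, -, rfl⟩ := mem_image.1 hv'
    obtain ⟨w, -, rfl⟩ := mem_image.1 hw'
    rw [binaryPoint_eq_of_mem_gridCover hsep hs hv hw]

theorem entOf_mariborMonster_le (hα : ⋃₀ (α : Set (Set I)) = univ) :
    entOf mariborMonster α ≤ ENNReal.ofReal (log φ) := by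
  rw [entOf, if_pos mahavierInf_mariborMonster_nonempty]
  refine limsup_log_div_le_of_le_mul_pow (C := 3 * φ ^ 2 * #α ^ 2) goldenRatio_pos ?_
  filter_upwards [eventually_ge_atTop 1] with m hm
  have hm' : (1 : ℝ) ≤ m := by exact_mod_cast hm
  calc (coverNum (MahavierFin mariborMonster m) (gridCover α (m + 1)) : ℝ)
      ≤ (m + 2) * Nat.fib (m + 3) * #α ^ 2 := by exact_mod_cast coverNum_mahavierFin_le hα m
    _ ≤ (3 * m) * φ ^ (m + 2) * #α ^ 2 := by
      gcongr
      · linarith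
      · exact fib_succ_le_goldenRatio_pow (m + 2)
    _ = 3 * φ ^ 2 * #α ^ 2 * m * φ ^ m := by ring

theorem ofReal_log_goldenRatio_le_entOf (hα : ⋃₀ (α : Set (Set I)) = univ)
    (hsep : ∀ u ∈ α, (0 : I) ∈ u → (1 : I) ∉ u) :
    ENNReal.ofReal (log φ) ≤ entOf mariborMonster α := by
  rw [entOf, if_pos mahavierInf_mariborMonster_nonempty]
  refine log_le_limsup_log_div_of_pow_le goldenRatio_pos (Eventually.of_forall fun m => ?_)
  calc φ ^ m ≤ Nat.fib (m + 2) := goldenRatio_pow_le_fib m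
    _ ≤ Nat.fib (m + 3) := by exact_mod_cast Nat.fib_le_fib_succ
    _ ≤ coverNum (MahavierFin mariborMonster m) (gridCover α (m + 1)) := by
      exact_mod_cast fib_le_coverNum_mahavierFin hα hsep m

end Covers

def twoIntervalCover : Finset (Set I) := {{t : I | (t : ℝ) < 2 / 3}, {t : I | 1 / 3 < (t : ℝ)}}

theorem mem_twoIntervalCover {u : Set I} :
    u ∈ twoIntervalCover ↔
      u = {t : I | (t : ℝ) < 2 / 3} ∨ u = {t : I | 1 / 3 < (t : ℝ)} := by
  simp [twoIntervalCover]

theorem twoIntervalCover_separates :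
    ∀ u ∈ twoIntervalCover, (0 : I) ∈ u → (1 : I) ∉ u := by
  intro u hu
  rcases mem_twoIntervalCover.1 hu with rfl | rfl <;> norm_num

theorem isMinimalIntervalCover_twoIntervalCover : IsMinimalIntervalCover twoIntervalCover := by
  refine ⟨fun u hu => ?_, ?_, fun β hβ hcov => ?_⟩
  · rcases mem_twoIntervalCover.1 hu with rfl | rfl
    · exact ⟨isOpen_Iio.preimage continuous_subtype_val,
        Set.ordConnected_Iio.preimage_mono (Subtype.mono_coe _)⟩
    · exact ⟨isOpen_Ioi.preimage continuous_subtype_val,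
        Set.ordConnected_Ioi.preimage_mono (Subtype.mono_coe _)⟩
  · refine Set.sUnion_eq_univ_iff.2 fun t => ?_
    by_cases ht : (t : ℝ) < 2 / 3
    · exact ⟨{t : I | (t : ℝ) < 2 / 3}, by simp [twoIntervalCover], ht⟩
    · refine ⟨{t : I | 1 / 3 < (t : ℝ)}, by simp [twoIntervalCover], ?_⟩
      simp only [Set.mem_ofPred_eq]
      linarith
  · obtain ⟨s₀, hs₀, h₀⟩ := Set.sUnion_eq_univ_iff.1 hcov 0
    obtain ⟨s₁, hs₁, h₁⟩ := Set.sUnion_eq_univ_iff.1 hcov 1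
    refine Subset.antisymm hβ fun u hu => ?_
    rcases mem_twoIntervalCover.1 (hβ hs₀) with rfl | rfl <;> [skip; norm_num at h₀]
    rcases mem_twoIntervalCover.1 (hβ hs₁) with rfl | rfl <;> [norm_num at h₁; skip]
    rcases mem_twoIntervalCover.1 hu with rfl | rfl
    exacts [hs₀, hs₁]

/-- Maribor Monster: the set
`G = ([0,1] × {0}) ∪ {(x, 1-x) : x ∈ [0,1]}` has entropy `log((1+√5)/2)`. -/
theorem ent_maribor_monster :
    ent ({p : unitInterval × unitInterval | (p.2 : ℝ) = 0} ∪
      {p : unitInterval × unitInterval | (p.2 : ℝ) = 1 - (p.1 : ℝ)}) =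
    ENNReal.ofReal (Real.log ((1 + Real.sqrt 5) / 2)) := by
  change ent mariborMonster = ENNReal.ofReal (log φ)
  refine le_antisymm (iSup_le fun α => entOf_mariborMonster_le α.2.2.1) ?_
  exact le_iSup_of_le ⟨twoIntervalCover, isMinimalIntervalCover_twoIntervalCover⟩
    (ofReal_log_goldenRatio_le_entOf isMinimalIntervalCover_twoIntervalCover.2.1
      twoIntervalCover_separates)
end
end
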